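/- arXiv:2512.06186 — 4 statements merged into one kernel-verified Lean document; each statement's English description precedes it below -/
import Mathlib

section
/- For every finite set P and finite set Q of quartets over P, every induced matching of the graph G(P,Q) has size at most 2; consequently, for every cut (A,B) of G(P,Q), sim_{G(P,Q)}(A,B) ≤ 2. -/
open SimpleGraph

/-- An induced matching of `G`: a set of edges of `G` that pairwise share no endpoint and
such that no edge of `G` joins an endpoint of one edge of the set to an endpoint of a
different edge of the set. -/
def IsInducedMatching {V : Type} (G : SimpleGraph V) (M : Set (Sym2 V)) : Prop :=
  M ⊆ G.edgeSet ∧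
    ∀ e ∈ M, ∀ f ∈ M, e ≠ f → ∀ x ∈ e, ∀ y ∈ f, x ≠ y ∧ ¬ G.Adj x y

/-- The bipartite graph `G[A, Aᶜ]` consisting of the edges of `G` crossing the cut `(A, Aᶜ)`. -/
def cutGraph {V : Type} (G : SimpleGraph V) (A : Set V) : SimpleGraph V where
  Adj x y := G.Adj x y ∧ ((x ∈ A ∧ y ∉ A) ∨ (x ∉ A ∧ y ∈ A))
  symm := by
    constructor
    rintro x y ⟨h, h'⟩
    exact ⟨h.symm, by tauto⟩
  loopless := by
    constructor
    rintro x ⟨h, -⟩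
    exact G.loopless.irrefl x h

/-- The graph `G − E[Xᶜ]`, obtained from `G` by deleting all edges with both endpoints
outside of `X`. -/
def delOutside {V : Type} (G : SimpleGraph V) (X : Set V) : SimpleGraph V where
  Adj x y := G.Adj x y ∧ (x ∈ X ∨ y ∈ X)
  symm := by
    constructor
    rintro x y ⟨h, h'⟩
    exact ⟨h.symm, h'.symm⟩
  loopless := by
    constructor
    rintro x ⟨h, -⟩
    exact G.loopless.irrefl x h

/-- The mim-value of the cut `(A, Aᶜ)`: the maximum size of an induced matching of `G[A, Aᶜ]`. -/
noncomputable def mimValue {V : Type} (G : SimpleGraph V) (A : Set V) : ℕ :=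
  sSup {n | ∃ M : Set (Sym2 V), IsInducedMatching (cutGraph G A) M ∧ M.ncard = n}

/-- The sim-value of the cut `(A, Aᶜ)`: the maximum size of a set of crossing edges of `G`
that is an induced matching of `G`. -/
noncomputable def simValue {V : Type} (G : SimpleGraph V) (A : Set V) : ℕ :=
  sSup {n | ∃ M : Set (Sym2 V), M ⊆ (cutGraph G A).edgeSet ∧
    IsInducedMatching G M ∧ M.ncard = n}

/-- The upper-induced matching number of `X`: the maximum size of a set of crossing edges of
`G` that is an induced matching of `G − E[Xᶜ]`. -/
noncomputable def upperIMN {V : Type} (G : SimpleGraph V) (X : Set V) : ℕ :=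
  sSup {n | ∃ M : Set (Sym2 V), M ⊆ (cutGraph G X).edgeSet ∧
    IsInducedMatching (delOutside G X) M ∧ M.ncard = n}

/-- The omim-value of the cut `(A, Aᶜ)`. -/
noncomputable def omimValue {V : Type} (G : SimpleGraph V) (A : Set V) : ℕ :=
  min (upperIMN G A) (upperIMN G Aᶜ)

/-- The Omim-value of the cut `(A, Aᶜ)`. -/
noncomputable def bigOmimValue {V : Type} (G : SimpleGraph V) (A : Set V) : ℕ :=
  max (upperIMN G A) (upperIMN G Aᶜ)

/-- A branch decomposition over a vertex set `V`: a finite ternary tree (every vertex has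
degree 1 or 3) together with a bijection from `V` to its set of leaves. -/
structure BranchDecomp (V : Type) : Type 1 where
  τ : Type
  tree : SimpleGraph τ
  finite : Finite τ
  isTree : tree.IsTree
  ternary : ∀ t : τ, (tree.neighborSet t).ncard = 1 ∨ (tree.neighborSet t).ncard = 3
  toLeaf : V → τ
  leafBij : Set.BijOn toLeaf Set.univ {t | (tree.neighborSet t).ncard = 1}

/-- The side of the cut induced by the tree edge `xy` that contains the endpoint `x`:
the set of vertices of `V` whose leaf lies in the component of `T − xy` containing `x`. -/
def BranchDecomp.side {V : Type} (D : BranchDecomp V) (x y : D.τ) : Set V :=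
  {v | (D.tree.deleteEdges {s(x, y)}).Reachable (D.toLeaf v) x}

/-- The width of a branch decomposition with respect to a cut-value function `val`:
the maximum of `val` over all cuts induced by edges of the tree. -/
noncomputable def BranchDecomp.width {V : Type} (D : BranchDecomp V) (val : Set V → ℕ) : ℕ :=
  sSup {n | ∃ x y : D.τ, D.tree.Adj x y ∧ n = val (D.side x y)}

/-- A branch decomposition is a caterpillar if its internal (degree-3) vertices induce a path. -/
def BranchDecomp.IsCaterpillar {V : Type} (D : BranchDecomp V) : Prop :=
  ∃ n : ℕ, Nonempty
    ((D.tree.induce {t | (D.tree.neighborSet t).ncard = 3}) ≃g SimpleGraph.pathGraph n)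

noncomputable def mimWidth {V : Type} (G : SimpleGraph V) : ℕ :=
  sInf {n | ∃ D : BranchDecomp V, D.width (mimValue G) = n}

noncomputable def simWidth {V : Type} (G : SimpleGraph V) : ℕ :=
  sInf {n | ∃ D : BranchDecomp V, D.width (simValue G) = n}

noncomputable def omimWidth {V : Type} (G : SimpleGraph V) : ℕ :=
  sInf {n | ∃ D : BranchDecomp V, D.width (omimValue G) = n}

noncomputable def bigOmimWidth {V : Type} (G : SimpleGraph V) : ℕ :=
  sInf {n | ∃ D : BranchDecomp V, D.width (bigOmimValue G) = n}

noncomputable def linMimWidth {V : Type} (G : SimpleGraph V) : ℕ :=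
  sInf {n | ∃ D : BranchDecomp V, D.IsCaterpillar ∧ D.width (mimValue G) = n}

noncomputable def linSimWidth {V : Type} (G : SimpleGraph V) : ℕ :=
  sInf {n | ∃ D : BranchDecomp V, D.IsCaterpillar ∧ D.width (simValue G) = n}

noncomputable def linOmimWidth {V : Type} (G : SimpleGraph V) : ℕ :=
  sInf {n | ∃ D : BranchDecomp V, D.IsCaterpillar ∧ D.width (omimValue G) = n}

noncomputable def linBigOmimWidth {V : Type} (G : SimpleGraph V) : ℕ :=
  sInf {n | ∃ D : BranchDecomp V, D.IsCaterpillar ∧ D.width (bigOmimValue G) = n}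

/-- A quartet `[ab|cd]` over `P`: four pairwise distinct elements of `P`, partitioned into
the two unordered pairs `{a, b}` and `{c, d}`. -/
structure Quartet (P : Type) where
  a : P
  b : P
  c : P
  d : P
  hab : a ≠ b
  hac : a ≠ c
  had : a ≠ d
  hbc : b ≠ c
  hbd : b ≠ d
  hcd : c ≠ d

/-- The four elements of a quartet, indexed by `Fin 4`. -/
def Quartet.elem {P : Type} (q : Quartet P) : Fin 4 → P := ![q.a, q.b, q.c, q.d]

/-- Whether two indices in `Fin 4` correspond to the same side (pair) of a quartet. -/
def sameSide (i j : Fin 4) : Prop := (i.val < 2 ∧ j.val < 2) ∨ (2 ≤ i.val ∧ 2 ≤ j.val)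

/-- A ternary tree with leaves labeled by `P` satisfies the quartet `[ab|cd]` if some edge of
the tree separates the leaves labeled `a, b` from the leaves labeled `c, d`. -/
def BranchDecomp.Satisfies {P : Type} (D : BranchDecomp P) (q : Quartet P) : Prop :=
  ∃ x y : D.τ, D.tree.Adj x y ∧
    q.a ∈ D.side x y ∧ q.b ∈ D.side x y ∧ q.c ∉ D.side x y ∧ q.d ∉ D.side x y

/-- A linear order `le` on `P` satisfies the quartet `[ab|cd]` if both `a` and `b` are
smaller than both `c` and `d`, or both `c` and `d` are smaller than both `a` and `b`. -/
def OrdSatisfies {P : Type} (le : P → P → Prop) (q : Quartet P) : Prop :=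
  (le q.a q.c ∧ le q.a q.d ∧ le q.b q.c ∧ le q.b q.d) ∨
  (le q.c q.a ∧ le q.d q.a ∧ le q.c q.b ∧ le q.d q.b)

/-- The vertices of the graph `G(P, Q)`: the points of `P` together with the vertices
`u_x^q` for `q ∈ Q` and `x` one of the four elements of `q` (indexed by `Fin 4`). -/
inductive QVert (P : Type) (Q : Finset (Quartet P)) : Type
  | pt (p : P)
  | u (q : {q : Quartet P // q ∈ Q}) (i : Fin 4)

/-- Base relation generating the edges of `G(P, Q)`. -/
def qRel {P : Type} {Q : Finset (Quartet P)} : QVert P Q → QVert P Q → Prop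
  | QVert.pt p, QVert.u q i => p = q.1.elem i
  | QVert.u q i, QVert.u q' j => q = q' → sameSide i j
  | _, _ => False

/-- The graph `G(P, Q)` of the sim-width/omim-width/Omim-width reduction. -/
def quartetGraph (P : Type) (Q : Finset (Quartet P)) : SimpleGraph (QVert P Q) :=
  SimpleGraph.fromRel qRel

/-- The vertices of the graph `G'(P, Q)`: the points of `P`, the vertices `u_x^q`, and the
vertices `γ_x^q`. -/
inductive GpVert (P : Type) (Q : Finset (Quartet P)) : Type
  | pt (p : P)
  | u (q : {q : Quartet P // q ∈ Q}) (i : Fin 4)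
  | g (q : {q : Quartet P // q ∈ Q}) (i : Fin 4)

/-- Base relation generating the edges of `G'(P, Q)`. -/
def gpRel {P : Type} {Q : Finset (Quartet P)} : GpVert P Q → GpVert P Q → Prop
  | GpVert.pt p, GpVert.u q i => p = q.1.elem i
  | GpVert.pt p, GpVert.g q i => p = q.1.elem i
  | GpVert.u q i, GpVert.u q' j => q = q' → sameSide i j
  | GpVert.u q _, GpVert.g q' _ => q ≠ q'
  | GpVert.g q _, GpVert.u q' _ => q ≠ q'
  | GpVert.g _ _, GpVert.g _ _ => True
  | _, _ => False

/-- The graph `G'(P, Q)` of the mim-width reduction. -/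
def gpGraph (P : Type) (Q : Finset (Quartet P)) : SimpleGraph (GpVert P Q) :=
  SimpleGraph.fromRel gpRel

/-- Base relation generating the edges of `H(P, Q)`; the extra vertex `ω` is `none`,
adjacent exactly to the vertices of `U`. -/
def hRel {P : Type} {Q : Finset (Quartet P)} :
    Option (GpVert P Q) → Option (GpVert P Q) → Prop
  | some x, some y => gpRel x y
  | none, some (GpVert.u _ _) => True
  | _, _ => False

/-- The graph `H(P, Q)`, obtained from `G'(P, Q)` by adding a vertex `ω` adjacent to all of `U`. -/
def hGraph (P : Type) (Q : Finset (Quartet P)) : SimpleGraph (Option (GpVert P Q)) :=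
  SimpleGraph.fromRel hRel

instance sameSide.dec (i j : Fin 4) : Decidable (sameSide i j) := by
  unfold sameSide; infer_instance

lemma quartet_adj_u_u {P : Type} {Q : Finset (Quartet P)}
    (q q' : {q : Quartet P // q ∈ Q}) (i j : Fin 4) (hne : q ≠ q') :
    (quartetGraph P Q).Adj (QVert.u q i) (QVert.u q' j) := by
  refine ⟨fun h => hne ?_, Or.inl fun h => absurd h hne⟩
  injection h

lemma quartet_adj_same {P : Type} {Q : Finset (Quartet P)}
    (q : {q : Quartet P // q ∈ Q}) (i j : Fin 4) (hij : i ≠ j) (hss : sameSide i j) :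
    (quartetGraph P Q).Adj (QVert.u q i) (QVert.u q j) := by
  refine ⟨fun h => hij ?_, Or.inl fun _ => hss⟩
  injection h with _ h2

lemma edge_has_u {P : Type} {Q : Finset (Quartet P)} {x y : QVert P Q}
    (h : (quartetGraph P Q).Adj x y) :
    (∃ q i, x = QVert.u q i) ∨ (∃ q i, y = QVert.u q i) := by
  cases x with
  | pt p =>
    cases y with
    | pt p' => exact absurd h.2 (by rintro (h | h) <;> exact h)
    | u q i => exact Or.inr ⟨q, i, rfl⟩
  | u q i => exact Or.inl ⟨q, i, rfl⟩

/-- Every induced matching of `G(P,Q)` has size at most 2; consequently, every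
cut `(A, Aᶜ)` of `G(P,Q)` has sim-value at most 2. -/
theorem stmt4 {P : Type} [Fintype P] (Q : Finset (Quartet P)) :
    (∀ M : Set (Sym2 (QVert P Q)),
      IsInducedMatching (quartetGraph P Q) M → M.ncard ≤ 2) ∧
    (∀ A : Set (QVert P Q), simValue (quartetGraph P Q) A ≤ 2) := by
  have main : ∀ M : Set (Sym2 (QVert P Q)),
      IsInducedMatching (quartetGraph P Q) M → M.ncard ≤ 2 := by
    intro M hM
    by_contra hlt
    push_neg at hlt
    have hfin : M.Finite := by
      by_contra hinf
      rw [Set.Infinite.ncard (by exact hinf)] at hlt; omega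
    rw [Set.two_lt_ncard hfin] at hlt
    obtain ⟨e1, he1, e2, he2, e3, he3, h12, h13, h23⟩ := hlt
    have key : ∀ e ∈ M, ∃ q i, (QVert.u q i : QVert P Q) ∈ e := by
      intro e he
      induction e with
      | h a b =>
        have hadj : (quartetGraph P Q).Adj a b := hM.1 he
        rcases edge_has_u hadj with ⟨q, i, rfl⟩ | ⟨q, i, rfl⟩
        exacts [⟨q, i, Sym2.mem_mk_left _ _⟩, ⟨q, i, Sym2.mem_mk_right _ _⟩]
    obtain ⟨q1, i1, hv1⟩ := key e1 he1
    obtain ⟨q2, i2, hv2⟩ := key e2 he2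
    obtain ⟨q3, i3, hv3⟩ := key e3 he3
    have c12 := hM.2 e1 he1 e2 he2 h12 _ hv1 _ hv2
    have c13 := hM.2 e1 he1 e3 he3 h13 _ hv1 _ hv3
    have c23 := hM.2 e2 he2 e3 he3 h23 _ hv2 _ hv3
    have hq12 : q1 = q2 := by
      by_contra h; exact c12.2 (quartet_adj_u_u _ _ _ _ h)
    have hq13 : q1 = q3 := by
      by_contra h; exact c13.2 (quartet_adj_u_u _ _ _ _ h)
    subst hq12; subst hq13
    have hi12 : i1 ≠ i2 := fun h => c12.1 (by rw [h])
    have hi13 : i1 ≠ i3 := fun h => c13.1 (by rw [h])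
    have hi23 : i2 ≠ i3 := fun h => c23.1 (by rw [h])
    have tri : ∀ i j k : Fin 4, i ≠ j → i ≠ k → j ≠ k →
        sameSide i j ∨ sameSide i k ∨ sameSide j k := by decide
    rcases tri i1 i2 i3 hi12 hi13 hi23 with h | h | h
    · exact c12.2 (quartet_adj_same _ _ _ hi12 h)
    · exact c13.2 (quartet_adj_same _ _ _ hi13 h)
    · exact c23.2 (quartet_adj_same _ _ _ hi23 h)
  refine ⟨main, fun A => ?_⟩
  apply csSup_le'
  rintro n ⟨M, -, hM, rfl⟩
  exact main M hM
end

section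
/- Let P be a finite set, Q a finite set of quartets over P, let q = [p_i p_j | p_k p_l] ∈ Q, and let (A,B) be a cut of G(P,Q) with p_i, p_k ∈ A and p_j, p_l ∈ B. Then sim_{G(P,Q)}(A,B) ≥ 2: some edge of the path p_i − u_i^q − u_j^q − p_j and some edge of the path p_k − u_k^q − u_l^q − p_l each have one endpoint in A and one in B, and any two such crossing edges form an induced matching of G(P,Q) of size 2. -/
open SimpleGraph

/-- The three edges of the path `p_i − u_i^q − u_j^q − p_j` in `G(P,Q)`. -/
def qTopPath {P : Type} {Q : Finset (Quartet P)} (q : Quartet P) (hq : q ∈ Q) :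
    Set (Sym2 (QVert P Q)) :=
  {s(QVert.pt q.a, QVert.u ⟨q, hq⟩ 0), s(QVert.u ⟨q, hq⟩ 0, QVert.u ⟨q, hq⟩ 1),
    s(QVert.u ⟨q, hq⟩ 1, QVert.pt q.b)}

/-- The three edges of the path `p_k − u_k^q − u_l^q − p_l` in `G(P,Q)`. -/
def qBotPath {P : Type} {Q : Finset (Quartet P)} (q : Quartet P) (hq : q ∈ Q) :
    Set (Sym2 (QVert P Q)) :=
  {s(QVert.pt q.c, QVert.u ⟨q, hq⟩ 2), s(QVert.u ⟨q, hq⟩ 2, QVert.u ⟨q, hq⟩ 3),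
    s(QVert.u ⟨q, hq⟩ 3, QVert.pt q.d)}


section StmtFiveAux

variable {P : Type} {Q : Finset (Quartet P)}

instance {P : Type} [Fintype P] {Q : Finset (Quartet P)} : Finite (QVert P Q) := by
  have h : Function.Injective (fun v : QVert P Q => match v with
    | QVert.pt p => Sum.inl p
    | QVert.u q i => (Sum.inr (q, i) : P ⊕ ({q : Quartet P // q ∈ Q} × Fin 4))) := by
    intro x y h
    cases x <;> cases y <;> simp_all
  exact Finite.of_injective _ h

lemma cutGraph_adj {V : Type} (G : SimpleGraph V) (A : Set V) (x y : V) :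
    (cutGraph G A).Adj x y ↔ G.Adj x y ∧ ((x ∈ A ∧ y ∉ A) ∨ (x ∉ A ∧ y ∈ A)) := Iff.rfl

lemma top_mem_sub (q : Quartet P) (hq : q ∈ Q) :
    ∀ e ∈ qTopPath q hq, ∀ x ∈ e,
      x ∈ ({QVert.pt q.a, QVert.u ⟨q, hq⟩ 0, QVert.u ⟨q, hq⟩ 1, QVert.pt q.b} :
        Set (QVert P Q)) := by
  intro e he x hx
  simp only [qTopPath, Set.mem_insert_iff, Set.mem_singleton_iff] at he
  rcases he with rfl | rfl | rfl <;> rw [Sym2.mem_iff] at hx <;>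
    rcases hx with rfl | rfl <;> simp

lemma bot_mem_sub (q : Quartet P) (hq : q ∈ Q) :
    ∀ e ∈ qBotPath q hq, ∀ x ∈ e,
      x ∈ ({QVert.pt q.c, QVert.u ⟨q, hq⟩ 2, QVert.u ⟨q, hq⟩ 3, QVert.pt q.d} :
        Set (QVert P Q)) := by
  intro e he x hx
  simp only [qBotPath, Set.mem_insert_iff, Set.mem_singleton_iff] at he
  rcases he with rfl | rfl | rfl <;> rw [Sym2.mem_iff] at hx <;>
    rcases hx with rfl | rfl <;> simp

lemma sep (q : Quartet P) (hq : q ∈ Q) :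
    ∀ x ∈ ({QVert.pt q.a, QVert.u ⟨q, hq⟩ 0, QVert.u ⟨q, hq⟩ 1, QVert.pt q.b} :
        Set (QVert P Q)),
    ∀ y ∈ ({QVert.pt q.c, QVert.u ⟨q, hq⟩ 2, QVert.u ⟨q, hq⟩ 3, QVert.pt q.d} :
        Set (QVert P Q)),
      x ≠ y ∧ ¬ (quartetGraph P Q).Adj x y := by
  intro x hx y hy
  simp only [Set.mem_insert_iff, Set.mem_singleton_iff] at hx hy
  rcases hx with rfl | rfl | rfl | rfl <;> rcases hy with rfl | rfl | rfl | rfl <;>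
    constructor <;>
      simp [quartetGraph, qRel, Quartet.elem, sameSide,
        q.hab, q.hac, q.had, q.hbc, q.hbd, q.hcd,
        q.hab.symm, q.hac.symm, q.had.symm, q.hbc.symm, q.hbd.symm, q.hcd.symm] <;>
      decide

end StmtFiveAux

/-- If `q = [p_i p_j | p_k p_l] ∈ Q` and `(A, B)` is a cut of `G(P,Q)` with
`p_i, p_k ∈ A` and `p_j, p_l ∈ B`, then some edge of each of the two paths crosses the cut,
any two such crossing edges form an induced matching of `G(P,Q)` of size 2, and
`sim(A,B) ≥ 2`. -/
theorem stmt5 {P : Type} [Fintype P] (Q : Finset (Quartet P)) (q : Quartet P) (hq : q ∈ Q)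
    (A : Set (QVert P Q))
    (hi : QVert.pt q.a ∈ A) (hk : QVert.pt q.c ∈ A)
    (hj : QVert.pt q.b ∉ A) (hl : QVert.pt q.d ∉ A) :
    (∃ e ∈ qTopPath q hq, e ∈ (cutGraph (quartetGraph P Q) A).edgeSet) ∧
    (∃ e ∈ qBotPath q hq, e ∈ (cutGraph (quartetGraph P Q) A).edgeSet) ∧
    (∀ e₁ ∈ qTopPath q hq, ∀ e₂ ∈ qBotPath q hq,
      e₁ ∈ (cutGraph (quartetGraph P Q) A).edgeSet →
      e₂ ∈ (cutGraph (quartetGraph P Q) A).edgeSet →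
      IsInducedMatching (quartetGraph P Q) {e₁, e₂} ∧
        ({e₁, e₂} : Set (Sym2 (QVert P Q))).ncard = 2) ∧
    2 ≤ simValue (quartetGraph P Q) A := by
  
  classical
  have cutsub : (cutGraph (quartetGraph P Q) A).edgeSet ⊆ (quartetGraph P Q).edgeSet := by
    intro e he
    induction e using Sym2.ind with
    | _ x y => exact (SimpleGraph.mem_edgeSet _).2 (((SimpleGraph.mem_edgeSet _).1 he).1)
  have adj1 : (quartetGraph P Q).Adj (QVert.pt q.a) (QVert.u ⟨q, hq⟩ 0) := by
    simp [quartetGraph, qRel, Quartet.elem]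
  have adj2 : (quartetGraph P Q).Adj (QVert.u ⟨q, hq⟩ 0) (QVert.u ⟨q, hq⟩ 1) := by
    simp [quartetGraph, qRel, sameSide] <;> decide
  have adj3 : (quartetGraph P Q).Adj (QVert.u ⟨q, hq⟩ 1) (QVert.pt q.b) := by
    simp [quartetGraph, qRel, Quartet.elem]
  have adj4 : (quartetGraph P Q).Adj (QVert.pt q.c) (QVert.u ⟨q, hq⟩ 2) := by
    simp [quartetGraph, qRel, Quartet.elem]
  have adj5 : (quartetGraph P Q).Adj (QVert.u ⟨q, hq⟩ 2) (QVert.u ⟨q, hq⟩ 3) := by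
    simp [quartetGraph, qRel, sameSide] <;> decide
  have adj6 : (quartetGraph P Q).Adj (QVert.u ⟨q, hq⟩ 3) (QVert.pt q.d) := by
    simp [quartetGraph, qRel, Quartet.elem]
  have cross_top : ∃ e ∈ qTopPath q hq, e ∈ (cutGraph (quartetGraph P Q) A).edgeSet := by
    by_cases h0 : QVert.u ⟨q, hq⟩ 0 ∈ A
    · by_cases h1 : QVert.u ⟨q, hq⟩ 1 ∈ A
      · refine ⟨s(QVert.u ⟨q, hq⟩ 1, QVert.pt q.b), ?_, ?_⟩
        · simp only [qTopPath, Set.mem_insert_iff, Set.mem_singleton_iff]; tauto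
        · exact (SimpleGraph.mem_edgeSet _).2 ((cutGraph_adj _ _ _ _).2 ⟨adj3, Or.inl ⟨h1, hj⟩⟩)
      · refine ⟨s(QVert.u ⟨q, hq⟩ 0, QVert.u ⟨q, hq⟩ 1), ?_, ?_⟩
        · simp only [qTopPath, Set.mem_insert_iff, Set.mem_singleton_iff]; tauto
        · exact (SimpleGraph.mem_edgeSet _).2 ((cutGraph_adj _ _ _ _).2 ⟨adj2, Or.inl ⟨h0, h1⟩⟩)
    · refine ⟨s(QVert.pt q.a, QVert.u ⟨q, hq⟩ 0), ?_, ?_⟩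
      · simp only [qTopPath, Set.mem_insert_iff, Set.mem_singleton_iff]; tauto
      · exact (SimpleGraph.mem_edgeSet _).2 ((cutGraph_adj _ _ _ _).2 ⟨adj1, Or.inl ⟨hi, h0⟩⟩)
  have cross_bot : ∃ e ∈ qBotPath q hq, e ∈ (cutGraph (quartetGraph P Q) A).edgeSet := by
    by_cases h2 : QVert.u ⟨q, hq⟩ 2 ∈ A
    · by_cases h3 : QVert.u ⟨q, hq⟩ 3 ∈ A
      · refine ⟨s(QVert.u ⟨q, hq⟩ 3, QVert.pt q.d), ?_, ?_⟩
        · simp only [qBotPath, Set.mem_insert_iff, Set.mem_singleton_iff]; tauto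
        · exact (SimpleGraph.mem_edgeSet _).2 ((cutGraph_adj _ _ _ _).2 ⟨adj6, Or.inl ⟨h3, hl⟩⟩)
      · refine ⟨s(QVert.u ⟨q, hq⟩ 2, QVert.u ⟨q, hq⟩ 3), ?_, ?_⟩
        · simp only [qBotPath, Set.mem_insert_iff, Set.mem_singleton_iff]; tauto
        · exact (SimpleGraph.mem_edgeSet _).2 ((cutGraph_adj _ _ _ _).2 ⟨adj5, Or.inl ⟨h2, h3⟩⟩)
    · refine ⟨s(QVert.pt q.c, QVert.u ⟨q, hq⟩ 2), ?_, ?_⟩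
      · simp only [qBotPath, Set.mem_insert_iff, Set.mem_singleton_iff]; tauto
      · exact (SimpleGraph.mem_edgeSet _).2 ((cutGraph_adj _ _ _ _).2 ⟨adj4, Or.inl ⟨hk, h2⟩⟩)
  have part3 : ∀ e₁ ∈ qTopPath q hq, ∀ e₂ ∈ qBotPath q hq,
      e₁ ∈ (cutGraph (quartetGraph P Q) A).edgeSet →
      e₂ ∈ (cutGraph (quartetGraph P Q) A).edgeSet →
      IsInducedMatching (quartetGraph P Q) {e₁, e₂} ∧
        ({e₁, e₂} : Set (Sym2 (QVert P Q))).ncard = 2 := by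
    intro e₁ he₁ e₂ he₂ hc₁ hc₂
    have hTop := top_mem_sub q hq e₁ he₁
    have hBot := bot_mem_sub q hq e₂ he₂
    have hne : e₁ ≠ e₂ := by
      intro h
      obtain ⟨x, hx⟩ : ∃ x, x ∈ e₁ := by
        simp only [qTopPath, Set.mem_insert_iff, Set.mem_singleton_iff] at he₁
        rcases he₁ with rfl | rfl | rfl <;> exact ⟨_, Sym2.mem_mk_left _ _⟩
      exact (sep q hq x (hTop x hx) x (hBot x (h ▸ hx))).1 rfl
    refine ⟨⟨?_, ?_⟩, Set.ncard_pair hne⟩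
    · rintro e (rfl | rfl)
      · exact cutsub hc₁
      · exact cutsub hc₂
    · intro e he f hf hef x hx y hy
      simp only [Set.mem_insert_iff, Set.mem_singleton_iff] at he hf
      rcases he with rfl | rfl <;> rcases hf with rfl | rfl
      · exact absurd rfl hef
      · exact sep q hq x (hTop x hx) y (hBot y hy)
      · have h := sep q hq y (hTop y hy) x (hBot x hx)
        exact ⟨h.1.symm, fun hxy => h.2 hxy.symm⟩
      · exact absurd rfl hef
  refine ⟨cross_top, cross_bot, part3, ?_⟩
  obtain ⟨e₁, he₁, hc₁⟩ := cross_top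
  obtain ⟨e₂, he₂, hc₂⟩ := cross_bot
  obtain ⟨hIM, hcard⟩ := part3 e₁ he₁ e₂ he₂ hc₁ hc₂
  have hmem : 2 ∈ {n | ∃ M : Set (Sym2 (QVert P Q)),
      M ⊆ (cutGraph (quartetGraph P Q) A).edgeSet ∧
      IsInducedMatching (quartetGraph P Q) M ∧ M.ncard = n} := by
    refine ⟨{e₁, e₂}, ?_, hIM, hcard⟩
    rintro e (rfl | rfl)
    exacts [hc₁, hc₂]
  have hbdd : BddAbove {n | ∃ M : Set (Sym2 (QVert P Q)),
      M ⊆ (cutGraph (quartetGraph P Q) A).edgeSet ∧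
      IsInducedMatching (quartetGraph P Q) M ∧ M.ncard = n} := by
    refine ⟨Nat.card (Sym2 (QVert P Q)), ?_⟩
    rintro n ⟨M, hM, -, rfl⟩
    have h := Set.ncard_le_ncard (Set.subset_univ M) Set.finite_univ
    simpa [Set.ncard_univ] using h
  exact le_csSup hbdd hmem
end

section
/- Let P be a finite set, Q a finite set of quartets over P, let q = [p_i p_j | p_k p_l] ∈ Q, and let (A,B) be a cut of H(P,Q) with p_i, p_k ∈ A, with all eight vertices u_i^q, u_j^q, u_k^q, u_l^q, γ_i^q, γ_j^q, γ_k^q, γ_l^q in B, and with ω ∈ A. Then the three edges ω u_j^q, p_i γ_i^q, and p_k γ_k^q form an induced matching of the bipartite graph H(P,Q)[A,B]; in particular, mim_{H(P,Q)}(A,B) ≥ 3. -/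
open SimpleGraph

instance gpVertFinite {P : Type} [Finite P] {Q : Finset (Quartet P)} :
    Finite (GpVert P Q) := by
  let f : P ⊕ (({q : Quartet P // q ∈ Q} × Fin 4) ⊕ ({q : Quartet P // q ∈ Q} × Fin 4)) →
      GpVert P Q := fun x =>
    match x with
    | .inl p => .pt p
    | .inr (.inl (q, i)) => .u q i
    | .inr (.inr (q, i)) => .g q i
  have hs : Function.Surjective f := by
    rintro (p | ⟨q, i⟩ | ⟨q, i⟩)
    · exact ⟨.inl p, rfl⟩
    · exact ⟨.inr (.inl (q, i)), rfl⟩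
    · exact ⟨.inr (.inr (q, i)), rfl⟩
  exact Finite.of_surjective f hs

/-- If `q = [p_i p_j | p_k p_l] ∈ Q` and `(A, B)` is a cut of `H(P,Q)` with
`p_i, p_k ∈ A`, all eight `u`- and `γ`-vertices of `q` in `B`, and `ω ∈ A`, then the three
edges `ω u_j^q`, `p_i γ_i^q`, `p_k γ_k^q` form an induced matching of `H(P,Q)[A,B]`; in
particular `mim(A,B) ≥ 3`. -/
theorem stmt13 {P : Type} [Fintype P] (Q : Finset (Quartet P)) (q : Quartet P) (hq : q ∈ Q)
    (A : Set (Option (GpVert P Q)))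
    (hi : some (GpVert.pt q.a) ∈ A) (hk : some (GpVert.pt q.c) ∈ A)
    (hu : ∀ i : Fin 4, some (GpVert.u ⟨q, hq⟩ i) ∉ A)
    (hg : ∀ i : Fin 4, some (GpVert.g ⟨q, hq⟩ i) ∉ A)
    (hw : (none : Option (GpVert P Q)) ∈ A) :
    IsInducedMatching (cutGraph (hGraph P Q) A)
      {s((none : Option (GpVert P Q)), some (GpVert.u ⟨q, hq⟩ 1)),
        s(some (GpVert.pt q.a), some (GpVert.g ⟨q, hq⟩ 0)),
        s(some (GpVert.pt q.c), some (GpVert.g ⟨q, hq⟩ 2))} ∧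
    ({s((none : Option (GpVert P Q)), some (GpVert.u ⟨q, hq⟩ 1)),
        s(some (GpVert.pt q.a), some (GpVert.g ⟨q, hq⟩ 0)),
        s(some (GpVert.pt q.c), some (GpVert.g ⟨q, hq⟩ 2))} :
      Set (Sym2 (Option (GpVert P Q)))).ncard = 3 ∧
    3 ≤ mimValue (hGraph P Q) A := by
  
  classical
  have hab := q.hab; have hac := q.hac; have had := q.had
  have hbc := q.hbc; have hbd := q.hbd; have hcd := q.hcd
  have e0 : q.elem 0 = q.a := rfl
  have e1 : q.elem 1 = q.b := rfl
  have e2 : q.elem 2 = q.c := rfl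
  have e3 : q.elem 3 = q.d := rfl
  set G := cutGraph (hGraph P Q) A with hG
  have nA : ∀ x y, x ∈ A → y ∈ A → ¬ G.Adj x y := by
    rintro x y hx hy ⟨-, h⟩; tauto
  have nB : ∀ x y, x ∉ A → y ∉ A → ¬ G.Adj x y := by
    rintro x y hx hy ⟨-, h⟩; tauto
  have nG : ∀ x y, ¬ (hGraph P Q).Adj x y → ¬ G.Adj x y := by
    rintro x y h ⟨h', -⟩; exact h h'
  have hmatch : IsInducedMatching G
      {s((none : Option (GpVert P Q)), some (GpVert.u ⟨q, hq⟩ 1)),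
        s(some (GpVert.pt q.a), some (GpVert.g ⟨q, hq⟩ 0)),
        s(some (GpVert.pt q.c), some (GpVert.g ⟨q, hq⟩ 2))} := by
    constructor
    · intro e he
      simp only [Set.mem_insert_iff, Set.mem_singleton_iff] at he
      rcases he with rfl | rfl | rfl <;> rw [SimpleGraph.mem_edgeSet]
      · exact ⟨⟨by simp, Or.inl trivial⟩, Or.inl ⟨hw, hu 1⟩⟩
      · exact ⟨⟨by simp, Or.inl e0.symm⟩, Or.inl ⟨hi, hg 0⟩⟩
      · exact ⟨⟨by simp, Or.inl e2.symm⟩, Or.inl ⟨hk, hg 2⟩⟩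
    · intro e he f hf hef x hx y hy
      simp only [Set.mem_insert_iff, Set.mem_singleton_iff] at he hf
      rcases he with rfl | rfl | rfl <;> rcases hf with rfl | rfl | rfl <;>
        rw [Sym2.mem_iff] at hx hy <;> rcases hx with rfl | rfl <;>
        rcases hy with rfl | rfl <;>
      first
      | exact absurd rfl hef
      | (refine ⟨by simp [hab, hac, had, hbc, hbd, hcd, hab.symm, hac.symm, had.symm,
            hbc.symm, hbd.symm, hcd.symm], ?_⟩
         first
         | exact nA _ _ (by assumption) (by assumption)
         | exact nB _ _ (hu _) (hu _)
         | exact nB _ _ (hu _) (hg _)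
         | exact nB _ _ (hg _) (hu _)
         | exact nB _ _ (hg _) (hg _)
         | exact nG _ _ (by
             simp [hGraph, hRel, gpRel, Quartet.elem, hab, hac, had, hbc, hbd, hcd,
               hab.symm, hac.symm, had.symm, hbc.symm, hbd.symm, hcd.symm]))
  have hcard : ({s((none : Option (GpVert P Q)), some (GpVert.u ⟨q, hq⟩ 1)),
        s(some (GpVert.pt q.a), some (GpVert.g ⟨q, hq⟩ 0)),
        s(some (GpVert.pt q.c), some (GpVert.g ⟨q, hq⟩ 2))} :
      Set (Sym2 (Option (GpVert P Q)))).ncard = 3 := by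
    refine Set.ncard_eq_three.mpr ⟨_, _, _, ?_, ?_, ?_, rfl⟩ <;>
      simp [Sym2.eq_iff, hac, hac.symm]
  refine ⟨hmatch, hcard, ?_⟩
  haveI : Finite (Option (GpVert P Q)) :=
    Finite.of_equiv _ (Equiv.optionEquivSumPUnit.{0, 0} (GpVert P Q)).symm
  have hbdd : BddAbove {n | ∃ M : Set (Sym2 (Option (GpVert P Q))),
      IsInducedMatching (cutGraph (hGraph P Q) A) M ∧ M.ncard = n} := by
    refine ⟨Nat.card (Sym2 (Option (GpVert P Q))), ?_⟩
    rintro n ⟨M, -, rfl⟩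
    simpa [Set.ncard_univ] using Set.ncard_le_ncard (Set.subset_univ M) Set.finite_univ
  exact le_csSup hbdd ⟨_, hmatch, hcard⟩
end

section
/- Let P be a finite set and Q a finite set of quartets over P, and suppose there is a linear order ≤ on P satisfying every quartet of Q. Then there is a linear order ≤' on the vertex set of G'(P,Q) such that every prefix cut (A,B) of ≤' satisfies mim_{G'(P,Q)}(A,B) ≤ 2. -/
open SimpleGraph

namespace Stmt17Aux

variable {P : Type} {Q : Finset (Quartet P)}

def phi : GpVert P Q → P
  | .pt p => p
  | .u q i => q.1.elem i
  | .g q i => q.1.elem i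

def qt : GpVert P Q → Option {q : Quartet P // q ∈ Q}
  | .pt _ => none
  | .u q _ => some q
  | .g q _ => some q

lemma adj_iff {v w : GpVert P Q} :
    (gpGraph P Q).Adj v w ↔ v ≠ w ∧ (gpRel v w ∨ gpRel w v) := Iff.rfl

instance sameSide.dec (i j : Fin 4) : Decidable (sameSide i j) := by
  unfold sameSide; infer_instance

lemma ssRefl : ∀ i : Fin 4, sameSide i i := by decide

lemma ssSymm : ∀ i j : Fin 4, sameSide j i → sameSide i j := by decide

lemma no_adj_pt_pt {p p' : P} : ¬ (gpGraph P Q).Adj (.pt p) (.pt p') := by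
  rw [adj_iff]
  rintro ⟨-, h | h⟩ <;> exact h

lemma pt_adj {p : P} {v : GpVert P Q} (h : (gpGraph P Q).Adj (.pt p) v) : phi v = p := by
  cases v with
  | pt p' => exact absurd h no_adj_pt_pt
  | u q i =>
    rcases (adj_iff.mp h).2 with h' | h'
    · exact (show p = q.1.elem i from h').symm
    · exact (show False from h').elim
  | g q i =>
    rcases (adj_iff.mp h).2 with h' | h'
    · exact (show p = q.1.elem i from h').symm
    · exact (show False from h').elim

lemma adj_gg {q q' : {q : Quartet P // q ∈ Q}} {i j : Fin 4}
    (hne : (GpVert.g q i : GpVert P Q) ≠ .g q' j) :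
    (gpGraph P Q).Adj (.g q i) (.g q' j) :=
  adj_iff.mpr ⟨hne, Or.inl trivial⟩

lemma nadj_uu {q q' : {q : Quartet P // q ∈ Q}} {i j : Fin 4}
    (hne : (GpVert.u q i : GpVert P Q) ≠ .u q' j)
    (h : ¬ (gpGraph P Q).Adj (.u q i) (.u q' j)) : q = q' ∧ ¬ sameSide i j := by
  rw [adj_iff] at h
  have h1 : ¬ ((q = q' → sameSide i j) ∨ (q' = q → sameSide j i)) := fun hh => h ⟨hne, hh⟩
  constructor
  · by_contra hq
    exact h1 (Or.inl fun hq' => absurd hq' hq)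
  · intro hs
    exact h1 (Or.inl fun _ => hs)

lemma nadj_ug {q q' : {q : Quartet P // q ∈ Q}} {i j : Fin 4}
    (h : ¬ (gpGraph P Q).Adj (.u q i) (.g q' j)) : q = q' := by
  by_contra hq
  exact h (adj_iff.mpr ⟨by simp, Or.inl hq⟩)

lemma nadj_gu {q q' : {q : Quartet P // q ∈ Q}} {i j : Fin 4}
    (h : ¬ (gpGraph P Q).Adj (.g q i) (.u q' j)) : q = q' := by
  by_contra hq
  exact h (adj_iff.mpr ⟨by simp, Or.inl hq⟩)

lemma no_adj_ug_same {q : {q : Quartet P // q ∈ Q}} {i j : Fin 4} :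
    ¬ (gpGraph P Q).Adj (.u q i) (.g q j) := by
  rw [adj_iff]
  rintro ⟨-, h | h⟩ <;> exact (show q ≠ q from h) rfl

lemma no_adj_gu_same {q : {q : Quartet P // q ∈ Q}} {i j : Fin 4} :
    ¬ (gpGraph P Q).Adj (.g q i) (.u q j) := fun h => no_adj_ug_same h.symm

lemma cross_qt {v w : GpVert P Q} (hne : v ≠ w) (h : ¬ (gpGraph P Q).Adj v w)
    {q q' : {q : Quartet P // q ∈ Q}} (hv : qt v = some q) (hw : qt w = some q') :
    q = q' := by
  cases v with
  | pt p => simp [qt] at hv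
  | u qv i =>
    cases w with
    | pt p => simp [qt] at hw
    | u qw j =>
      obtain rfl : qv = q := by simpa [qt] using hv
      obtain rfl : qw = q' := by simpa [qt] using hw
      exact (nadj_uu hne h).1
    | g qw j =>
      obtain rfl : qv = q := by simpa [qt] using hv
      obtain rfl : qw = q' := by simpa [qt] using hw
      exact nadj_ug h
  | g qv i =>
    cases w with
    | pt p => simp [qt] at hw
    | u qw j =>
      obtain rfl : qv = q := by simpa [qt] using hv
      obtain rfl : qw = q' := by simpa [qt] using hw
      exact nadj_gu h
    | g qw j => exact absurd (adj_gg hne) h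

end Stmt17Aux
namespace Stmt17Aux

variable {P : Type} {Q : Finset (Quartet P)}

lemma three_contra {le : P → P → Prop} (hle : IsLinearOrder P le)
    (hsat : ∀ q ∈ Q, OrdSatisfies le q)
    (x y : Fin 3 → GpVert P Q)
    (adj : ∀ k, (gpGraph P Q).Adj (x k) (y k))
    (ord : ∀ k l, le (phi (x k)) (phi (y l)))
    (nadj : ∀ k l, k ≠ l → ¬ (gpGraph P Q).Adj (x k) (y l))
    (dx : ∀ k l, k ≠ l → x k ≠ x l)
    (dy : ∀ k l, k ≠ l → y k ≠ y l)
    (dxy : ∀ k l, k ≠ l → x k ≠ y l) : False := by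
  have hanti : ∀ a b : P, le a b → le b a → a = b :=
    fun a b h h' => hle.toIsPartialOrder.toAntisymm.antisymm a b h h'
  -- flat lemmas
  have flatx : ∀ k l, k ≠ l → ∀ p p', x k = .pt p → x l = .pt p' → False := by
    intro k l hkl p p' hk hl
    have h1 : phi (y k) = p := pt_adj (hk ▸ adj k)
    have h2 : phi (y l) = p' := pt_adj (hl ▸ adj l)
    have e1 : le p p' := by have h := ord k l; rw [hk, h2] at h; exact h
    have e2 : le p' p := by have h := ord l k; rw [hl, h1] at h; exact h
    exact dx k l hkl (by rw [hk, hl, hanti p p' e1 e2])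
  have flaty : ∀ k l, k ≠ l → ∀ p p', y k = .pt p → y l = .pt p' → False := by
    intro k l hkl p p' hk hl
    have h1 : phi (x k) = p := pt_adj (hk ▸ adj k).symm
    have h2 : phi (x l) = p' := pt_adj (hl ▸ adj l).symm
    have e1 : le p p' := by have h := ord k l; rw [h1, hl] at h; exact h
    have e2 : le p' p := by have h := ord l k; rw [h2, hk] at h; exact h
    exact dy k l hkl (by rw [hk, hl, hanti p p' e1 e2])
  have ptOr : ∀ v : GpVert P Q, (∃ p, v = .pt p) ∨ (∃ q, qt v = some q) := by
    intro v; cases v <;> simp [qt]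
  -- pivot: the two quartets on a both-W edge coincide
  have pivot : ∀ k0 k1 k2 : Fin 3, k0 ≠ k1 → k0 ≠ k2 → k1 ≠ k2 →
      ∀ qa qb, qt (x k0) = some qa → qt (y k0) = some qb → qa = qb := by
    intro k0 k1 k2 h01 h02 h12 qa qb hqa hqb
    by_contra hab
    have hXq : ∀ k, k ≠ k0 → ∀ q, qt (x k) = some q → q = qb := by
      intro k hk q hq
      exact cross_qt (dxy k k0 hk) (nadj k k0 hk) hq hqb
    have hYq : ∀ k, k ≠ k0 → ∀ q, qt (y k) = some q → q = qa := by
      intro k hk q hq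
      exact (cross_qt (dxy k0 k (Ne.symm hk)) (nadj k0 k (Ne.symm hk)) hqa hq).symm
    rcases ptOr (x k1) with ⟨p1, hp1⟩ | ⟨q1, hq1⟩
    · rcases ptOr (x k2) with ⟨p2, hp2⟩ | ⟨q2, hq2⟩
      · exact flatx k1 k2 h12 p1 p2 hp1 hp2
      · have hq2b : q2 = qb := hXq k2 (Ne.symm h02) q2 hq2
        rcases ptOr (y k1) with ⟨p1', hp1'⟩ | ⟨q1', hq1'⟩
        · have h := adj k1; rw [hp1, hp1'] at h; exact no_adj_pt_pt h
        · have hqa1 : q1' = qa := hYq k1 (Ne.symm h01) _ hq1'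
          have hcr : q2 = q1' :=
            cross_qt (dxy k2 k1 (Ne.symm h12)) (nadj k2 k1 (Ne.symm h12)) hq2 hq1'
          exact hab (by rw [← hqa1, ← hcr]; exact hq2b)
    · have hq1b : q1 = qb := hXq k1 (Ne.symm h01) q1 hq1
      rcases ptOr (y k1) with ⟨p1', hp1'⟩ | ⟨q1', hq1'⟩
      · rcases ptOr (y k2) with ⟨p2', hp2'⟩ | ⟨q2', hq2'⟩
        · exact flaty k1 k2 h12 _ _ hp1' hp2'
        · have h2a : q2' = qa := hYq k2 (Ne.symm h02) _ hq2'
          have hcr : q1 = q2' := cross_qt (dxy k1 k2 h12) (nadj k1 k2 h12) hq1 hq2'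
          exact hab (by rw [← h2a, ← hcr]; exact hq1b)
      · have h1a : q1' = qa := hYq k1 (Ne.symm h01) _ hq1'
        rcases ptOr (x k2) with ⟨p2, hp2⟩ | ⟨q2, hq2⟩
        · rcases ptOr (y k2) with ⟨p2', hp2'⟩ | ⟨q2', hq2'⟩
          · have h := adj k2; rw [hp2, hp2'] at h; exact no_adj_pt_pt h
          · have h2a : q2' = qa := hYq k2 (Ne.symm h02) _ hq2'
            have hcr : q1 = q2' := cross_qt (dxy k1 k2 h12) (nadj k1 k2 h12) hq1 hq2'
            exact hab (by rw [← h2a, ← hcr]; exact hq1b)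
        · have h2b : q2 = qb := hXq k2 (Ne.symm h02) _ hq2
          have hcr : q2 = q1' :=
            cross_qt (dxy k2 k1 (Ne.symm h12)) (nadj k2 k1 (Ne.symm h12)) hq2 hq1'
          exact hab (by rw [← h1a, ← hcr]; exact h2b)
  -- pigeonhole : some edge has both endpoints in W
  have pigeon : ∃ k : Fin 3, (∃ q, qt (x k) = some q) ∧ (∃ q, qt (y k) = some q) := by
    by_contra hno
    push_neg at hno
    have f : ∀ k : Fin 3, (∃ p, x k = .pt p) ∨ (∃ p, y k = .pt p) := by
      intro k
      rcases ptOr (x k) with h | h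
      · exact Or.inl h
      · rcases ptOr (y k) with h' | h'
        · exact Or.inr h'
        · obtain ⟨q', hq'⟩ := h'
          exact (hno k h q' hq').elim
    rcases f 0 with ⟨p0, h0⟩ | ⟨p0, h0⟩ <;> rcases f 1 with ⟨p1, h1⟩ | ⟨p1, h1⟩ <;>
      rcases f 2 with ⟨p2, h2⟩ | ⟨p2, h2⟩
    · exact flatx 0 1 (by decide) _ _ h0 h1
    · exact flatx 0 1 (by decide) _ _ h0 h1
    · exact flatx 0 2 (by decide) _ _ h0 h2
    · exact flaty 1 2 (by decide) _ _ h1 h2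
    · exact flatx 1 2 (by decide) _ _ h1 h2
    · exact flaty 0 2 (by decide) _ _ h0 h2
    · exact flaty 0 1 (by decide) _ _ h0 h1
    · exact flaty 0 1 (by decide) _ _ h0 h1
  obtain ⟨k0, ⟨qa, hqa⟩, ⟨qb, hqb⟩⟩ := pigeon
  obtain ⟨k1, k2, h01, h02, h12⟩ : ∃ k1 k2 : Fin 3, k0 ≠ k1 ∧ k0 ≠ k2 ∧ k1 ≠ k2 := by
    fin_cases k0
    · exact ⟨1, 2, by decide, by decide, by decide⟩
    · exact ⟨0, 2, by decide, by decide, by decide⟩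
    · exact ⟨0, 1, by decide, by decide, by decide⟩
  have hq0 : qa = qb := pivot k0 k1 k2 h01 h02 h12 qa qb hqa hqb
  -- all W endpoints have quartet qa
  have uniX : ∀ k q, qt (x k) = some q → q = qa := by
    intro k q hq
    by_cases hk : k = k0
    · subst hk; rw [hqa] at hq; injection hq with h; exact h.symm
    · exact (cross_qt (dxy k k0 hk) (nadj k k0 hk) hq hqb).trans hq0.symm
  have uniY : ∀ k q, qt (y k) = some q → q = qa := by
    intro k q hq
    by_cases hk : k = k0
    · subst hk; rw [hqb] at hq; injection hq with h; exact h.symm.trans hq0.symm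
    · exact (cross_qt (dxy k0 k (Ne.symm hk)) (nadj k0 k (Ne.symm hk)) hqa hq).symm
  -- classification of the three edges
  have classify : ∀ k : Fin 3,
      (∃ i j : Fin 4, sameSide i j ∧
        (x k = .u qa i ∨ x k = .pt (qa.1.elem i)) ∧
        (y k = .u qa j ∨ y k = .pt (qa.1.elem j)) ∧
        (x k = .u qa i ∨ y k = .u qa j)) ∨
      ((∃ i, x k = .g qa i) ∨ (∃ i, y k = .g qa i)) := by
    intro k
    cases hxk : x k with
    | pt p =>
      cases hyk : y k with
      | pt p' =>
        have h := adj k; rw [hxk, hyk] at h; exact absurd h no_adj_pt_pt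
      | u q j =>
        have hq : q = qa := uniY k q (by simp [hyk, qt])
        have h := adj k; rw [hxk, hyk] at h
        have hp : q.1.elem j = p := pt_adj h
        refine Or.inl ⟨j, j, ssRefl j, Or.inr ?_, Or.inl ?_, Or.inr ?_⟩
        · rw [hq] at hp; rw [hp]
        · rw [hq]
        · rw [hq]
      | g q j =>
        have hq : q = qa := uniY k q (by simp [hyk, qt])
        exact Or.inr (Or.inr ⟨j, by rw [hq]⟩)
    | u q i =>
      have hq : q = qa := uniX k q (by simp [hxk, qt])
      cases hyk : y k with
      | pt p' =>
        have h := adj k; rw [hxk, hyk] at h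
        have helem : q.1.elem i = p' := pt_adj h.symm
        refine Or.inl ⟨i, i, ssRefl i, Or.inl ?_, Or.inr ?_, Or.inl ?_⟩
        · rw [hq]
        · rw [hq] at helem; rw [helem]
        · rw [hq]
      | u q' j =>
        have hq' : q' = qa := uniY k q' (by simp [hyk, qt])
        have hss : sameSide i j := by
          have h := adj k; rw [hxk, hyk, hq, hq'] at h
          rcases (adj_iff.mp h).2 with h' | h'
          · exact (show qa = qa → sameSide i j from h') rfl
          · exact ssSymm i j ((show qa = qa → sameSide j i from h') rfl)
        exact Or.inl ⟨i, j, hss, Or.inl (by rw [hq]), Or.inl (by rw [hq']), Or.inl (by rw [hq])⟩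
      | g q' j =>
        have hq' : q' = qa := uniY k q' (by simp [hyk, qt])
        exact Or.inr (Or.inr ⟨j, by rw [hq']⟩)
    | g q i =>
      have hq : q = qa := uniX k q (by simp [hxk, qt])
      exact Or.inr (Or.inl ⟨i, by rw [hq]⟩)
  -- at most one edge contains a γ-vertex
  have notTwoG : ∀ k l, k ≠ l →
      ((∃ i, x k = .g qa i) ∨ (∃ i, y k = .g qa i)) →
      ((∃ i, x l = .g qa i) ∨ (∃ i, y l = .g qa i)) → False := by
    intro k l hkl hk hl
    rcases hk with ⟨i, hxk⟩ | ⟨i, hyk⟩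
    · rcases hl with ⟨i', hxl⟩ | ⟨i', hyl⟩
      · -- γ at x k and x l
        cases hyk : y k with
        | u q' j =>
          have hq' : q' = qa := uniY k q' (by simp [hyk, qt])
          have h := adj k; rw [hxk, hyk, hq'] at h
          exact no_adj_gu_same h
        | g q' j =>
          have hne2 : (GpVert.g qa i' : GpVert P Q) ≠ .g q' j := by
            rw [← hxl, ← hyk]; exact dxy l k (Ne.symm hkl)
          have hn := nadj l k (Ne.symm hkl); rw [hxl, hyk] at hn
          exact hn (adj_gg hne2)
        | pt p =>
          cases hyl : y l with
          | pt p' => exact flaty k l hkl p p' hyk hyl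
          | u q' j =>
            have hq' : q' = qa := uniY l q' (by simp [hyl, qt])
            have h := adj l; rw [hxl, hyl, hq'] at h
            exact no_adj_gu_same h
          | g q' j =>
            have hne2 : (GpVert.g qa i : GpVert P Q) ≠ .g q' j := by
              rw [← hxk, ← hyl]; exact dxy k l hkl
            have hn := nadj k l hkl; rw [hxk, hyl] at hn
            exact hn (adj_gg hne2)
      · -- γ at x k and y l : cross pair
        have hne2 : (GpVert.g qa i : GpVert P Q) ≠ .g qa i' := by
          rw [← hxk, ← hyl]; exact dxy k l hkl
        have hn := nadj k l hkl; rw [hxk, hyl] at hn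
        exact hn (adj_gg hne2)
    · rcases hl with ⟨i', hxl⟩ | ⟨i', hyl⟩
      · have hne2 : (GpVert.g qa i' : GpVert P Q) ≠ .g qa i := by
          rw [← hxl, ← hyk]; exact dxy l k (Ne.symm hkl)
        have hn := nadj l k (Ne.symm hkl); rw [hxl, hyk] at hn
        exact hn (adj_gg hne2)
      · -- γ at y k and y l
        cases hxk : x k with
        | u q' j =>
          have hq' : q' = qa := uniX k q' (by simp [hxk, qt])
          have h := adj k; rw [hxk, hyk, hq'] at h
          exact no_adj_ug_same h
        | g q' j =>
          have hne2 : (GpVert.g q' j : GpVert P Q) ≠ .g qa i' := by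
            rw [← hxk, ← hyl]; exact dxy k l hkl
          have hn := nadj k l hkl; rw [hxk, hyl] at hn
          exact hn (adj_gg hne2)
        | pt p =>
          cases hxl : x l with
          | pt p' => exact flatx k l hkl p p' hxk hxl
          | u q' j =>
            have hq' : q' = qa := uniX l q' (by simp [hxl, qt])
            have h := adj l; rw [hxl, hyl, hq'] at h
            exact no_adj_ug_same h
          | g q' j =>
            have hne2 : (GpVert.g q' j : GpVert P Q) ≠ .g qa i := by
              rw [← hxl, ← hyk]; exact dxy l k (Ne.symm hkl)
            have hn := nadj l k (Ne.symm hkl); rw [hxl, hyk] at hn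
            exact hn (adj_gg hne2)
  -- the ordering endgame
  have E' : ∀ i1 j1 i2 j2 : Fin 4, sameSide i1 j1 → sameSide i2 j2 → ¬ sameSide i1 i2 →
      le (qa.1.elem i1) (qa.1.elem j2) → le (qa.1.elem i2) (qa.1.elem j1) → False := by
    intro i1 j1 i2 j2 ss1 ss2 hop h12' h21'
    have kill : ∀ u v : P, le u v → le v u → u ≠ v → False :=
      fun u v h h' hne => hne (hanti u v h h')
    have sideSplit : ∀ i1 j1 i2 j2 : Fin 4, sameSide i1 j1 → sameSide i2 j2 →
        ¬ sameSide i1 i2 →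
        ((i1.val < 2 ∧ j1.val < 2 ∧ 2 ≤ i2.val ∧ 2 ≤ j2.val) ∨
         (2 ≤ i1.val ∧ 2 ≤ j1.val ∧ i2.val < 2 ∧ j2.val < 2)) := by decide
    have lowmem : ∀ i : Fin 4, i.val < 2 → qa.1.elem i = qa.1.a ∨ qa.1.elem i = qa.1.b := by
      intro i hi
      fin_cases i
      · exact Or.inl rfl
      · exact Or.inr rfl
      · exact absurd hi (by decide)
      · exact absurd hi (by decide)
    have highmem : ∀ i : Fin 4, 2 ≤ i.val → qa.1.elem i = qa.1.c ∨ qa.1.elem i = qa.1.d := by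
      intro i hi
      fin_cases i
      · exact absurd hi (by decide)
      · exact absurd hi (by decide)
      · exact Or.inl rfl
      · exact Or.inr rfl
    obtain ⟨hs1, hs2, hs3, hs4⟩ | ⟨hs1, hs2, hs3, hs4⟩ := sideSplit i1 j1 i2 j2 ss1 ss2 hop
    · rcases hsat qa.1 qa.2 with ⟨s1, s2, s3, s4⟩ | ⟨s1, s2, s3, s4⟩
      · rcases highmem i2 hs3 with e2 | e2 <;> rcases lowmem j1 hs2 with e1 | e1 <;>
          rw [e1, e2] at h21'
        · exact kill _ _ s1 h21' qa.1.hac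
        · exact kill _ _ s3 h21' qa.1.hbc
        · exact kill _ _ s2 h21' qa.1.had
        · exact kill _ _ s4 h21' qa.1.hbd
      · rcases lowmem i1 hs1 with e1 | e1 <;> rcases highmem j2 hs4 with e2 | e2 <;>
          rw [e1, e2] at h12'
        · exact kill _ _ h12' s1 qa.1.hac
        · exact kill _ _ h12' s2 qa.1.had
        · exact kill _ _ h12' s3 qa.1.hbc
        · exact kill _ _ h12' s4 qa.1.hbd
    · rcases hsat qa.1 qa.2 with ⟨s1, s2, s3, s4⟩ | ⟨s1, s2, s3, s4⟩
      · rcases highmem i1 hs1 with e1 | e1 <;> rcases lowmem j2 hs4 with e2 | e2 <;>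
          rw [e1, e2] at h12'
        · exact kill _ _ s1 h12' qa.1.hac
        · exact kill _ _ s3 h12' qa.1.hbc
        · exact kill _ _ s2 h12' qa.1.had
        · exact kill _ _ s4 h12' qa.1.hbd
      · rcases lowmem i2 hs3 with e2 | e2 <;> rcases highmem j1 hs2 with e1 | e1 <;>
          rw [e1, e2] at h21'
        · exact kill _ _ h21' s1 qa.1.hac
        · exact kill _ _ h21' s2 qa.1.had
        · exact kill _ _ h21' s3 qa.1.hbc
        · exact kill _ _ h21' s4 qa.1.hbd
  have sideL1 : ∀ a b c : Fin 4, sameSide b c → ¬ sameSide a c → ¬ sameSide a b := by decide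
  have sideL2 : ∀ a b c : Fin 4, sameSide a b → ¬ sameSide c b → ¬ sameSide a c := by decide
  have getphix : ∀ k (i : Fin 4), (x k = .u qa i ∨ x k = .pt (qa.1.elem i)) →
      phi (x k) = qa.1.elem i := by
    intro k i h; rcases h with h | h <;> rw [h] <;> rfl
  have getphiy : ∀ k (j : Fin 4), (y k = .u qa j ∨ y k = .pt (qa.1.elem j)) →
      phi (y k) = qa.1.elem j := by
    intro k j h; rcases h with h | h <;> rw [h] <;> rfl
  have pair : ∀ k l, k ≠ l →
      (∃ i j : Fin 4, sameSide i j ∧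
        (x k = .u qa i ∨ x k = .pt (qa.1.elem i)) ∧
        (y k = .u qa j ∨ y k = .pt (qa.1.elem j)) ∧
        (x k = .u qa i ∨ y k = .u qa j)) →
      (∃ i j : Fin 4, sameSide i j ∧
        (x l = .u qa i ∨ x l = .pt (qa.1.elem i)) ∧
        (y l = .u qa j ∨ y l = .pt (qa.1.elem j)) ∧
        (x l = .u qa i ∨ y l = .u qa j)) → False := by
    intro k l hkl hSk hSl
    obtain ⟨i1, j1, ss1, hx1, hy1, hu1⟩ := hSk
    obtain ⟨i2, j2, ss2, hx2, hy2, hu2⟩ := hSl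
    have px1 := getphix k i1 hx1
    have py1 := getphiy k j1 hy1
    have px2 := getphix l i2 hx2
    have py2 := getphiy l j2 hy2
    have h12' : le (qa.1.elem i1) (qa.1.elem j2) := by
      have h := ord k l; rw [px1, py2] at h; exact h
    have h21' : le (qa.1.elem i2) (qa.1.elem j1) := by
      have h := ord l k; rw [px2, py1] at h; exact h
    rcases hx1 with hxu1 | hxp1
    · rcases hy2 with hyu2 | hyp2
      · have hne : (GpVert.u qa i1 : GpVert P Q) ≠ .u qa j2 := by
          rw [← hxu1, ← hyu2]; exact dxy k l hkl
        have hn := nadj k l hkl; rw [hxu1, hyu2] at hn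
        exact E' i1 j1 i2 j2 ss1 ss2 (sideL1 i1 i2 j2 ss2 (nadj_uu hne hn).2) h12' h21'
      · rcases hu2 with hxu2 | hyu2
        · rcases hy1 with hyu1 | hyp1
          · have hne : (GpVert.u qa i2 : GpVert P Q) ≠ .u qa j1 := by
              rw [← hxu2, ← hyu1]; exact dxy l k (Ne.symm hkl)
            have hn := nadj l k (Ne.symm hkl); rw [hxu2, hyu1] at hn
            exact E' i1 j1 i2 j2 ss1 ss2 (sideL2 i1 j1 i2 ss1 (nadj_uu hne hn).2) h12' h21'
          · exact flaty k l hkl _ _ hyp1 hyp2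
        · rw [hyp2] at hyu2; exact absurd hyu2 (by simp)
    · have hyu1 : y k = .u qa j1 := by
        rcases hu1 with h | h
        · rw [hxp1] at h; exact absurd h (by simp)
        · exact h
      rcases hx2 with hxu2 | hxp2
      · have hne : (GpVert.u qa i2 : GpVert P Q) ≠ .u qa j1 := by
          rw [← hxu2, ← hyu1]; exact dxy l k (Ne.symm hkl)
        have hn := nadj l k (Ne.symm hkl); rw [hxu2, hyu1] at hn
        exact E' i1 j1 i2 j2 ss1 ss2 (sideL2 i1 j1 i2 ss1 (nadj_uu hne hn).2) h12' h21'
      · exact flatx k l hkl _ _ hxp1 hxp2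
  rcases classify 0 with c0 | g0 <;> rcases classify 1 with c1 | g1 <;>
    rcases classify 2 with c2 | g2
  · exact pair 0 1 (by decide) c0 c1
  · exact pair 0 1 (by decide) c0 c1
  · exact pair 0 2 (by decide) c0 c2
  · exact notTwoG 1 2 (by decide) g1 g2
  · exact pair 1 2 (by decide) c1 c2
  · exact notTwoG 0 2 (by decide) g0 g2
  · exact notTwoG 0 1 (by decide) g0 g1
  · exact notTwoG 0 1 (by decide) g0 g1

end Stmt17Aux
/-- If some linear order on `P` satisfies every quartet of `Q`, then there is
a linear order on the vertex set of `G'(P,Q)` all of whose prefix cuts have mim-value at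
most 2. -/
theorem stmt17 {P : Type} [Fintype P] (Q : Finset (Quartet P))
    (le : P → P → Prop) (hle : IsLinearOrder P le)
    (hsat : ∀ q ∈ Q, OrdSatisfies le q) :
    ∃ le' : GpVert P Q → GpVert P Q → Prop, IsLinearOrder (GpVert P Q) le' ∧
      ∀ A : Set (GpVert P Q), A.Nonempty → A ≠ Set.univ →
        (∀ x ∈ A, ∀ y, le' y x → y ∈ A) →
        mimValue (gpGraph P Q) A ≤ 2 := by
  classical
  have hfin : Finite (GpVert P Q) := by
    refine Finite.of_injective (fun v : GpVert P Q =>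
      (match v with
        | .pt p => Sum.inl p
        | .u q i => Sum.inr (Sum.inl (q, i))
        | .g q i => Sum.inr (Sum.inr (q, i)) :
        P ⊕ ({q : Quartet P // q ∈ Q} × Fin 4) ⊕ ({q : Quartet P // q ∈ Q} × Fin 4))) ?_
    intro a b hab
    cases a <;> cases b <;> simp_all
  obtain ⟨r, hr⟩ : ∃ f : GpVert P Q → ℕ, Function.Injective f := by
    obtain ⟨n, ⟨e⟩⟩ := Finite.exists_equiv_fin (GpVert P Q)
    exact ⟨fun v => (e v).val, fun a b h => e.injective (Fin.val_injective h)⟩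
  have hrefl : ∀ a : P, le a a := fun a => hle.toIsPartialOrder.toIsPreorder.toRefl.refl a
  have htrans : ∀ a b c : P, le a b → le b c → le a c :=
    fun a b c h h' => hle.toIsPartialOrder.toIsPreorder.toIsTrans.trans a b c h h'
  have hanti : ∀ a b : P, le a b → le b a → a = b :=
    fun a b h h' => hle.toIsPartialOrder.toAntisymm.antisymm a b h h'
  have htot : ∀ a b : P, le a b ∨ le b a := fun a b => hle.toTotal.total a b
  refine ⟨fun v w =>
    (le (Stmt17Aux.phi v) (Stmt17Aux.phi w) ∧ Stmt17Aux.phi v ≠ Stmt17Aux.phi w) ∨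
    (Stmt17Aux.phi v = Stmt17Aux.phi w ∧ r v ≤ r w), ?_, ?_⟩
  · refine { refl := ?_, trans := ?_, antisymm := ?_, total := ?_ }
    · intro a; exact Or.inr ⟨rfl, le_refl _⟩
    · intro a b c hab hbc
      rcases hab with ⟨h1, h2⟩ | ⟨h1, h2⟩ <;> rcases hbc with ⟨h3, h4⟩ | ⟨h3, h4⟩
      · refine Or.inl ⟨htrans _ _ _ h1 h3, fun he => h2 ?_⟩
        rw [← he] at h3
        exact hanti _ _ h1 h3
      · exact Or.inl ⟨by rw [← h3]; exact h1, fun he => h2 (he.trans h3.symm)⟩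
      · exact Or.inl ⟨by rw [h1]; exact h3, fun he => h4 (h1.symm.trans he)⟩
      · exact Or.inr ⟨h1.trans h3, h2.trans h4⟩
    · intro a b hab hba
      rcases hab with ⟨h1, h2⟩ | ⟨h1, h2⟩ <;> rcases hba with ⟨h3, h4⟩ | ⟨h3, h4⟩
      · exact absurd (hanti _ _ h1 h3) h2
      · exact absurd h3.symm h2
      · exact absurd h1.symm h4
      · exact hr (Nat.le_antisymm h2 h4)
    · intro a b
      by_cases he : Stmt17Aux.phi a = Stmt17Aux.phi b
      · rcases Nat.le_total (r a) (r b) with h | h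
        · exact Or.inl (Or.inr ⟨he, h⟩)
        · exact Or.inr (Or.inr ⟨he.symm, h⟩)
      · rcases htot (Stmt17Aux.phi a) (Stmt17Aux.phi b) with h | h
        · exact Or.inl (Or.inl ⟨h, he⟩)
        · exact Or.inr (Or.inl ⟨h, fun h' => he h'.symm⟩)
  · intro A hAne hAuniv hdc
    have horder : ∀ v w, v ∈ A → w ∉ A → le (Stmt17Aux.phi v) (Stmt17Aux.phi w) := by
      intro v w hv hw
      by_cases he : Stmt17Aux.phi v = Stmt17Aux.phi w
      · rw [he]; exact hrefl _
      · rcases htot (Stmt17Aux.phi v) (Stmt17Aux.phi w) with h | h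
        · exact h
        · exact absurd (hdc v hv w (Or.inl ⟨h, fun h' => he h'.symm⟩)) hw
    rw [mimValue]
    apply csSup_le
    · refine ⟨0, ∅, ⟨Set.empty_subset _, ?_⟩, Set.ncard_empty _⟩
      intro e he
      exact absurd he (Set.notMem_empty e)
    · rintro n ⟨M, hM, rfl⟩
      by_contra hn
      push_neg at hn
      obtain ⟨T, hTM, hT3⟩ := Set.exists_subset_card_eq (show 3 ≤ M.ncard by omega)
      obtain ⟨e1, e2, e3, h12, h13, h23, rfl⟩ := Set.ncard_eq_three.mp hT3
      have he1 : e1 ∈ M := hTM (by simp)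
      have he2 : e2 ∈ M := hTM (by simp)
      have he3 : e3 ∈ M := hTM (by simp)
      have extract : ∀ e : Sym2 (GpVert P Q), e ∈ M →
          ∃ a b, (gpGraph P Q).Adj a b ∧ a ∈ A ∧ b ∉ A ∧ e = s(a, b) := by
        intro e
        induction e using Sym2.ind with
        | _ a b =>
          intro he
          have hee := hM.1 he
          rw [SimpleGraph.mem_edgeSet] at hee
          have hee' : (gpGraph P Q).Adj a b ∧ ((a ∈ A ∧ b ∉ A) ∨ (a ∉ A ∧ b ∈ A)) := hee
          obtain ⟨hadj, hs⟩ := hee'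
          rcases hs with ⟨hh1, hh2⟩ | ⟨hh1, hh2⟩
          · exact ⟨a, b, hadj, hh1, hh2, rfl⟩
          · exact ⟨b, a, hadj.symm, hh2, hh1, Sym2.eq_swap⟩
      obtain ⟨x1, y1, a1, hx1, hy1, hE1⟩ := extract e1 he1
      obtain ⟨x2, y2, a2, hx2, hy2, hE2⟩ := extract e2 he2
      obtain ⟨x3, y3, a3, hx3, hy3, hE3⟩ := extract e3 he3
      have m1L : x1 ∈ e1 := by rw [hE1]; exact Sym2.mem_mk_left _ _
      have m1R : y1 ∈ e1 := by rw [hE1]; exact Sym2.mem_mk_right _ _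
      have m2L : x2 ∈ e2 := by rw [hE2]; exact Sym2.mem_mk_left _ _
      have m2R : y2 ∈ e2 := by rw [hE2]; exact Sym2.mem_mk_right _ _
      have m3L : x3 ∈ e3 := by rw [hE3]; exact Sym2.mem_mk_left _ _
      have m3R : y3 ∈ e3 := by rw [hE3]; exact Sym2.mem_mk_right _ _
      have cr12 := hM.2 e1 he1 e2 he2 h12
      have cr13 := hM.2 e1 he1 e3 he3 h13
      have cr23 := hM.2 e2 he2 e3 he3 h23
      have cr21 := hM.2 e2 he2 e1 he1 (Ne.symm h12)
      have cr31 := hM.2 e3 he3 e1 he1 (Ne.symm h13)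
      have cr32 := hM.2 e3 he3 e2 he2 (Ne.symm h23)
      have mkcut : ∀ {a b : GpVert P Q}, (gpGraph P Q).Adj a b → a ∈ A → b ∉ A →
          (cutGraph (gpGraph P Q) A).Adj a b := by
        intro a b h ha hb
        exact ⟨h, Or.inl ⟨ha, hb⟩⟩
      have n12 : ¬ (gpGraph P Q).Adj x1 y2 :=
        fun h => (cr12 x1 m1L y2 m2R).2 (mkcut h hx1 hy2)
      have n13 : ¬ (gpGraph P Q).Adj x1 y3 :=
        fun h => (cr13 x1 m1L y3 m3R).2 (mkcut h hx1 hy3)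
      have n21 : ¬ (gpGraph P Q).Adj x2 y1 :=
        fun h => (cr21 x2 m2L y1 m1R).2 (mkcut h hx2 hy1)
      have n23 : ¬ (gpGraph P Q).Adj x2 y3 :=
        fun h => (cr23 x2 m2L y3 m3R).2 (mkcut h hx2 hy3)
      have n31 : ¬ (gpGraph P Q).Adj x3 y1 :=
        fun h => (cr31 x3 m3L y1 m1R).2 (mkcut h hx3 hy1)
      have n32 : ¬ (gpGraph P Q).Adj x3 y2 :=
        fun h => (cr32 x3 m3L y2 m2R).2 (mkcut h hx3 hy2)
      have dx12 : x1 ≠ x2 := (cr12 x1 m1L x2 m2L).1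
      have dx13 : x1 ≠ x3 := (cr13 x1 m1L x3 m3L).1
      have dx23 : x2 ≠ x3 := (cr23 x2 m2L x3 m3L).1
      have dy12 : y1 ≠ y2 := (cr12 y1 m1R y2 m2R).1
      have dy13 : y1 ≠ y3 := (cr13 y1 m1R y3 m3R).1
      have dy23 : y2 ≠ y3 := (cr23 y2 m2R y3 m3R).1
      have dxy12 : x1 ≠ y2 := (cr12 x1 m1L y2 m2R).1
      have dxy13 : x1 ≠ y3 := (cr13 x1 m1L y3 m3R).1
      have dxy21 : x2 ≠ y1 := (cr21 x2 m2L y1 m1R).1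
      have dxy23 : x2 ≠ y3 := (cr23 x2 m2L y3 m3R).1
      have dxy31 : x3 ≠ y1 := (cr31 x3 m3L y1 m1R).1
      have dxy32 : x3 ≠ y2 := (cr32 x3 m3L y2 m2R).1
      have o11 := horder x1 y1 hx1 hy1
      have o12 := horder x1 y2 hx1 hy2
      have o13 := horder x1 y3 hx1 hy3
      have o21 := horder x2 y1 hx2 hy1
      have o22 := horder x2 y2 hx2 hy2
      have o23 := horder x2 y3 hx2 hy3
      have o31 := horder x3 y1 hx3 hy1
      have o32 := horder x3 y2 hx3 hy2
      have o33 := horder x3 y3 hx3 hy3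
      refine Stmt17Aux.three_contra hle hsat ![x1, x2, x3] ![y1, y2, y3] ?_ ?_ ?_ ?_ ?_ ?_
      · intro k
        fin_cases k
        · exact a1
        · exact a2
        · exact a3
      · intro k l
        fin_cases k <;> fin_cases l
        · exact o11
        · exact o12
        · exact o13
        · exact o21
        · exact o22
        · exact o23
        · exact o31
        · exact o32
        · exact o33
      · intro k l hkl
        fin_cases k <;> fin_cases l <;>
          first
            | exact absurd rfl hkl
            | exact n12 | exact n13 | exact n21 | exact n23 | exact n31 | exact n32
      · intro k l hkl
        fin_cases k <;> fin_cases l <;>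
          first
            | exact absurd rfl hkl
            | exact dx12 | exact dx13 | exact dx23
            | exact dx12.symm | exact dx13.symm | exact dx23.symm
      · intro k l hkl
        fin_cases k <;> fin_cases l <;>
          first
            | exact absurd rfl hkl
            | exact dy12 | exact dy13 | exact dy23
            | exact dy12.symm | exact dy13.symm | exact dy23.symm
      · intro k l hkl
        fin_cases k <;> fin_cases l <;>
          first
            | exact absurd rfl hkl
            | exact dxy12 | exact dxy13 | exact dxy21
            | exact dxy23 | exact dxy31 | exact dxy32
end
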